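/- arXiv:math/0205291 — 3 statements merged into one kernel-verified Lean document; each statement's English description precedes it below -/
import Mathlib

section
/- Let (X,d,∗) be a pointed metric space and let L(X) be the free vector space on X with ∗ identified with 0, equipped with the largest seminorm p such that p(x − y) ≤ d(x,y) for all x,y ∈ X. Then p is a norm and the induced distance restricted to X coincides with d. -/
open scoped BigOperators

/-- The free real vector space on a pointed metric space `(X, base)`:
the vector space with Hamel basis `X \ {base}` (and `base` serving as zero). -/
def FreeL (X : Type*) [MetricSpace X] (base : X) : Type _ :=
  {x : X // x ≠ base} →₀ ℝ

namespace FreeL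

open Classical

variable {X : Type*} [MetricSpace X]

noncomputable instance (base : X) : AddCommGroup (FreeL X base) :=
  Finsupp.instAddCommGroup

noncomputable instance (base : X) : Module ℝ (FreeL X base) :=
  Finsupp.module _ _

/-- The canonical embedding of `X` into `FreeL X base`, sending `base` to `0`. -/
noncomputable def δ (base : X) (x : X) : FreeL X base :=
  if h : x = base then 0 else Finsupp.single ⟨x, h⟩ 1

/-- A seminorm on the free vector space whose induced distance on `X` is majorized
by the metric `d`. -/
def IsGoodSeminorm (base : X) (p : Seminorm ℝ (FreeL X base)) : Prop :=
  ∀ x y : X, p (δ base x - δ base y) ≤ dist x y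

/-- The largest seminorm on `FreeL X base` whose induced distance on `X` is
majorized by the metric of `X`. -/
noncomputable def freeNorm (base : X) (z : FreeL X base) : ℝ :=
  ⨆ p : {p : Seminorm ℝ (FreeL X base) // IsGoodSeminorm base p}, p.1 z

/-!
Every 1-Lipschitz `f : X → ℝ` induces the linear functional `lift f : δ x ↦ f x - f base`, and
`|lift f ·|` is an admissible seminorm, so it lies below `freeNorm`. With `f = dist · y` this gives
`freeNorm (δ x - δ y) ≥ dist x y`. If `a` lies in the support of `z`, the distance to the finite
set `{base} ∪ (supp z \ {a})` picks out the single term `z a * f a ≠ 0`, so `freeNorm z > 0`.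
The supremum is finite because every admissible seminorm is bounded by `∑ |z x| * dist x base`.
-/

variable {base : X}

theorem δ_self : δ base base = 0 := dif_pos rfl

theorem δ_coe (x : {x : X // x ≠ base}) : δ base x.val = Finsupp.single x 1 := dif_neg x.2

-- `FreeL` is a plain `def`, so elements are typed as `{x // x ≠ base} →₀ ℝ` wherever `z a` or
-- `z.support` is needed.
theorem sum_smul_δ (z : {x : X // x ≠ base} →₀ ℝ) : (z.sum fun x c ↦ c • δ base x.val) = z := by
  simp only [δ_coe]
  exact (Finsupp.sum_congr fun x _ ↦ Finsupp.smul_single_one x (z x)).trans z.sum_single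

theorem IsGoodSeminorm.apply_le {p : Seminorm ℝ (FreeL X base)} (hp : IsGoodSeminorm base p)
    (z : {x : X // x ≠ base} →₀ ℝ) : p z ≤ z.sum fun x c ↦ |c| * dist x.val base := by
  calc p z = p (z.sum fun x c ↦ c • δ base x.val) := by rw [sum_smul_δ]
    _ ≤ z.sum fun x c ↦ p (c • δ base x.val) :=
      Finset.le_sum_of_subadditive p (map_zero p).le (map_add_le_add p) _ _
    _ ≤ z.sum fun x c ↦ |c| * dist x.val base := by
      refine Finset.sum_le_sum fun x _ ↦ ?_
      dsimp only
      rw [map_smul_eq_mul, Real.norm_eq_abs]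
      gcongr
      simpa [δ_self] using hp x base

theorem bddAbove_range_isGoodSeminorm (z : {x : X // x ≠ base} →₀ ℝ) :
    BddAbove (Set.range fun p : {p : Seminorm ℝ (FreeL X base) // IsGoodSeminorm base p} ↦ p.1 z) :=
  ⟨_, Set.forall_mem_range.2 fun p ↦ p.2.apply_le z⟩

theorem IsGoodSeminorm.le_freeNorm {p : Seminorm ℝ (FreeL X base)} (hp : IsGoodSeminorm base p)
    (z : FreeL X base) : p z ≤ freeNorm base z :=
  le_ciSup (bddAbove_range_isGoodSeminorm z) ⟨p, hp⟩

theorem freeNorm_δ_sub_δ_le (x y : X) : freeNorm base (δ base x - δ base y) ≤ dist x y := by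
  have : Nonempty {p : Seminorm ℝ (FreeL X base) // IsGoodSeminorm base p} :=
    ⟨⟨0, fun x y ↦ dist_nonneg⟩⟩
  exact ciSup_le fun p ↦ p.2 x y

variable (base) in
noncomputable def lift (f : X → ℝ) : FreeL X base →ₗ[ℝ] ℝ :=
  Finsupp.linearCombination ℝ fun x ↦ f x.val - f base

theorem lift_apply (f : X → ℝ) (z : {x : X // x ≠ base} →₀ ℝ) :
    lift base f z = z.sum fun x c ↦ c * (f x - f base) :=
  rfl

theorem lift_δ (f : X → ℝ) (x : X) : lift base f (δ base x) = f x - f base := by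
  by_cases hx : x = base
  · simp [hx, δ_self]
  · rw [show δ base x = Finsupp.single ⟨x, hx⟩ 1 from δ_coe ⟨x, hx⟩, lift_apply,
      Finsupp.sum_single_index] <;> simp

theorem isGoodSeminorm_abs_lift {f : X → ℝ} (hf : LipschitzWith 1 f) :
    IsGoodSeminorm base ((normSeminorm ℝ ℝ).comp (lift base f)) := fun x y ↦ by
  simpa [lift_δ, ← Real.dist_eq] using hf.dist_le_mul x y

theorem abs_lift_le_freeNorm {f : X → ℝ} (hf : LipschitzWith 1 f) (z : FreeL X base) :
    |lift base f z| ≤ freeNorm base z :=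
  (isGoodSeminorm_abs_lift hf).le_freeNorm z

theorem lift_eq_mul_of_forall_ne {f : X → ℝ} {z : {x : X // x ≠ base} →₀ ℝ}
    {a : {x : X // x ≠ base}} (hf : ∀ b ∈ z.support, b ≠ a → f b = f base) :
    lift base f z = z a * (f a - f base) := by
  rw [lift_apply, Finsupp.sum, Finset.sum_eq_single a]
  · intro b hb hba
    simp [hf b hb hba]
  · intro ha
    simp [Finsupp.notMem_support_iff.1 ha]

theorem eq_zero_of_freeNorm_eq_zero {z : {x : X // x ≠ base} →₀ ℝ} (hz : freeNorm base z = 0) :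
    z = 0 := by
  by_contra hne
  obtain ⟨a, ha⟩ := Finsupp.support_nonempty_iff.2 hne
  set S : Set X := insert base (Subtype.val '' (↑(z.support.erase a) : Set {x : X // x ≠ base}))
  have hS : IsClosed S := ((Set.toFinite _).image _).insert base |>.isClosed
  have haS : a.val ∉ S := by
    rintro (h | ⟨b, hb, hba⟩)
    · exact a.2 h
    · exact (Finset.mem_erase.1 hb).1 (Subtype.ext hba)
  let f : X → ℝ := (Metric.infDist · S)
  have hfS : ∀ x ∈ S, f x = 0 := fun x hx ↦ Metric.infDist_zero_of_mem hx
  have hfa : 0 < f a := (hS.notMem_iff_infDist_pos ⟨base, Set.mem_insert _ _⟩).1 haS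
  have hlift : lift base f z = z a * f a := by
    rw [lift_eq_mul_of_forall_ne, hfS base (Set.mem_insert _ _), sub_zero]
    intro b hb hba
    rw [hfS base (Set.mem_insert _ _)]
    exact hfS b (Set.mem_insert_of_mem _ ⟨b, Finset.mem_erase.2 ⟨hba, hb⟩, rfl⟩)
  have := abs_lift_le_freeNorm (Metric.lipschitz_infDist_pt S) z
  rw [hz, hlift, abs_nonpos_iff] at this
  exact (mul_ne_zero (Finsupp.mem_support_iff.1 ha) hfa.ne') this

theorem freeNorm_δ_sub_δ (x y : X) : freeNorm base (δ base x - δ base y) = dist x y := by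
  refine (freeNorm_δ_sub_δ_le x y).antisymm ?_
  have := abs_lift_le_freeNorm (LipschitzWith.dist_left y) (δ base x - δ base y)
  simpa [lift_δ] using this

end FreeL

/-- The largest seminorm `p` on `L(X)` with `p (x - y) ≤ d x y` for `x, y ∈ X`
is in fact a norm, and the distance it induces on `X` coincides with `d`. -/
theorem freeNorm_is_norm_and_extends_metric
    {X : Type*} [MetricSpace X] (base : X) :
    (∀ z : FreeL X base, FreeL.freeNorm base z = 0 → z = 0) ∧
    (∀ x y : X,
      FreeL.freeNorm base (FreeL.δ base x - FreeL.δ base y) = dist x y) :=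
  ⟨fun _ ↦ FreeL.eq_zero_of_freeNorm_eq_zero, FreeL.freeNorm_δ_sub_δ⟩
end

section
/- Integer value property of the transportation problem: if a real matrix A has the property that the sum of entries in each row and each column is an integer, then the nonzero entries of A can be replaced by integers without changing any row-sum or column-sum. -/
/-!
Let `S` be the set of non-integral entries of `A`. Since every line sum is an integer, a line
that meets `S` meets it at least twice, so `#S` is at least the number of rows plus the number of
columns meeting `S`. The line sums of a matrix supported on `S` satisfy one linear relation (the
row sums and the column sums have the same total), hence some nonzero `F` supported on `S` has
all line sums zero. Subtracting the multiple of `F` that makes one entry of `S` vanish keeps the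
line sums, the zeros of `A` and the integral entries, and shrinks `S`; induct on `#S`.
-/

open Finset

theorem Finset.two_mul_card_image_le {α β : Type*} [DecidableEq β] {f : α → β}
    {s : Finset α} (h : ∀ a ∈ s, ∃ b ∈ s, b ≠ a ∧ f b = f a) : 2 * #(s.image f) ≤ #s := by
  refine mul_card_image_le_card s 2 fun c hc => ?_
  obtain ⟨a, ha, rfl⟩ := mem_image.mp hc
  obtain ⟨b, hb, hba, hfb⟩ := h a ha
  exact one_lt_card.mpr
    ⟨a, mem_filter.mpr ⟨ha, rfl⟩, b, mem_filter.mpr ⟨hb, hfb⟩, hba.symm⟩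

theorem AddSubgroup.exists_ne_notMem_of_sum_mem {ι M : Type*} [AddCommGroup M] [DecidableEq ι]
    (G : AddSubgroup M) {s : Finset ι} {f : ι → M} (hs : ∑ x ∈ s, f x ∈ G) {a : ι}
    (ha : a ∈ s) (hfa : f a ∉ G) : ∃ b ∈ s, b ≠ a ∧ f b ∉ G := by
  by_contra! h
  rw [← add_sum_erase s f ha] at hs
  refine hfa ((G.add_mem_cancel_right (G.sum_mem fun b hb => ?_)).mp hs)
  exact h b (mem_of_mem_erase hb) (ne_of_mem_erase hb)

section
variable {K ι κ : Type*} [Field K] [Fintype ι] [Fintype κ]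

theorem Matrix.exists_ne_zero_supported_sum_eq_zero (S : Finset (ι × κ)) (hS : S.Nonempty)
    (hrow : ∀ p ∈ S, ∃ q ∈ S, q ≠ p ∧ q.1 = p.1)
    (hcol : ∀ p ∈ S, ∃ q ∈ S, q ≠ p ∧ q.2 = p.2) :
    ∃ F : Matrix ι κ K, F ≠ 0 ∧ (∀ i j, (i, j) ∉ S → F i j = 0) ∧
      (∀ i, ∑ j, F i j = 0) ∧ ∀ j, ∑ i, F i j = 0 := by
  classical
  obtain ⟨p₀, hp₀⟩ := hS
  set R := S.image Prod.fst
  set C := S.image Prod.snd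
  have hj₀ : p₀.2 ∈ C := mem_image_of_mem _ hp₀
  set C' := C.erase p₀.2
  let E := Function.ExtendByZero.linearMap K ((↑) : S → ι × κ)
  -- The column sum at `p₀.2` is left out: it is determined by the others and the row sums.
  let L : (ι × κ → K) →ₗ[K] (R → K) × (C' → K) :=
    { toFun := fun h => (fun i => ∑ j, h (i, j), fun j => ∑ i, h (i, j))
      map_add' := fun _ _ => by ext <;> simp [sum_add_distrib]
      map_smul' := fun _ _ => by ext <;> simp [mul_sum] }
  have hdim : Module.finrank K ((R → K) × (C' → K)) < Module.finrank K (S → K) := by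
    have hR : 2 * #R ≤ #S := two_mul_card_image_le hrow
    have hC : 2 * #C ≤ #S := two_mul_card_image_le hcol
    have hR₀ : 0 < #R := card_pos.mpr ⟨_, mem_image_of_mem _ hp₀⟩
    simp only [Module.finrank_prod, Module.finrank_fintype_fun_eq_card, Fintype.card_coe]
    rw [card_erase_of_mem hj₀]
    omega
  obtain ⟨g, hg, hg₀⟩ :=
    Submodule.ne_bot_iff _ |>.mp (LinearMap.ker_ne_bot_of_finrank_lt (f := L ∘ₗ E) hdim)
  replace hg := LinearMap.mem_ker.mp hg
  set F : Matrix ι κ K := fun i j => E g (i, j)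
  have hF : ∀ p : S, F p.1.1 p.1.2 = g p := fun p => Subtype.val_injective.extend_apply g 0 p
  have hFS : ∀ i j, (i, j) ∉ S → F i j = 0 := fun i j h =>
    Function.extend_apply' _ _ _ fun ⟨p, hp⟩ => h (hp ▸ p.2)
  have hrow₀ : ∀ i, ∑ j, F i j = 0 := by
    intro i
    by_cases hi : i ∈ R
    · exact congrFun (congrArg Prod.fst hg) ⟨i, hi⟩
    · exact sum_eq_zero fun j _ => hFS i j fun h => hi (mem_image_of_mem Prod.fst h)
  have hcol₀ : ∀ j ≠ p₀.2, ∑ i, F i j = 0 := by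
    intro j hj
    by_cases hjC : j ∈ C
    · exact congrFun (congrArg Prod.snd hg) ⟨j, mem_erase.mpr ⟨hj, hjC⟩⟩
    · exact sum_eq_zero fun i _ => hFS i j fun h => hjC (mem_image_of_mem Prod.snd h)
  refine ⟨F, fun h => hg₀ (funext fun p => by simpa [h] using (hF p).symm), hFS, hrow₀,
    fun j => ?_⟩
  by_cases hj : j = p₀.2
  · calc ∑ i, F i j = ∑ j', ∑ i, F i j' :=
          (sum_eq_single j (fun j' _ h => hcol₀ j' (hj ▸ h)) (by simp)).symm
      _ = 0 := by rw [sum_comm]; exact sum_eq_zero fun i _ => hrow₀ i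
  · exact hcol₀ j hj

open Classical in
noncomputable def Matrix.entriesNotMem (G : AddSubgroup K) (A : Matrix ι κ K) :
    Finset (ι × κ) :=
  {p | A p.1 p.2 ∉ G}

theorem Matrix.mem_entriesNotMem {G : AddSubgroup K} {A : Matrix ι κ K} {p : ι × κ} :
    p ∈ A.entriesNotMem G ↔ A p.1 p.2 ∉ G := by
  simp [Matrix.entriesNotMem]

theorem Matrix.exists_card_entriesNotMem_lt (G : AddSubgroup K) (A : Matrix ι κ K)
    (hrow : ∀ i, ∑ j, A i j ∈ G) (hcol : ∀ j, ∑ i, A i j ∈ G)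
    (hA : (A.entriesNotMem G).Nonempty) :
    ∃ A' : Matrix ι κ K, #(A'.entriesNotMem G) < #(A.entriesNotMem G) ∧
      (∀ i j, A i j = 0 → A' i j = 0) ∧
      (∀ i, ∑ j, A' i j = ∑ j, A i j) ∧ ∀ j, ∑ i, A' i j = ∑ i, A i j := by
  classical
  set S := A.entriesNotMem G
  obtain ⟨F, hF₀, hFS, hFrow, hFcol⟩ := exists_ne_zero_supported_sum_eq_zero (K := K) S hA
    (fun p hp => by
      obtain ⟨j, -, hj, hAj⟩ := G.exists_ne_notMem_of_sum_mem (hrow p.1) (mem_univ p.2)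
        (mem_entriesNotMem.mp hp)
      exact ⟨(p.1, j), mem_entriesNotMem.mpr hAj, fun h => hj (congrArg Prod.snd h), rfl⟩)
    (fun p hp => by
      obtain ⟨i, -, hi, hAi⟩ := G.exists_ne_notMem_of_sum_mem (hcol p.2) (mem_univ p.1)
        (mem_entriesNotMem.mp hp)
      exact ⟨(i, p.2), mem_entriesNotMem.mpr hAi, fun h => hi (congrArg Prod.fst h), rfl⟩)
  obtain ⟨i₀, j₀, hF⟩ : ∃ i j, F i j ≠ 0 := by
    by_contra! h
    exact hF₀ (Matrix.ext h)
  set A' := A - (A i₀ j₀ / F i₀ j₀) • F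
  have hA'S : ∀ i j, (i, j) ∉ S → A' i j = A i j := fun i j h => by simp [A', hFS i j h]
  have hsub : A'.entriesNotMem G ⊆ S.erase (i₀, j₀) := by
    intro ⟨i, j⟩ hp
    rw [mem_entriesNotMem] at hp
    refine mem_erase.mpr ⟨?_, ?_⟩
    · rintro ⟨⟩
      exact hp (by simp [A', hF, G.zero_mem])
    · by_contra h
      exact hp (hA'S i j h ▸ not_not.mp fun h' => h (mem_entriesNotMem.mpr h'))
  refine ⟨A', (card_le_card hsub).trans_lt (card_erase_lt_of_mem ?_), fun i j h => ?_,
    fun i => by simp [A', sum_sub_distrib, ← mul_sum, hFrow],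
    fun j => by simp [A', sum_sub_distrib, ← mul_sum, hFcol]⟩
  · exact not_not.mp fun h => hF (hFS i₀ j₀ h)
  · rw [hA'S i j fun hS => mem_entriesNotMem.mp hS (h ▸ G.zero_mem), h]

theorem Matrix.exists_mem_addSubgroup_sum_eq (G : AddSubgroup K) (A : Matrix ι κ K)
    (hrow : ∀ i, ∑ j, A i j ∈ G) (hcol : ∀ j, ∑ i, A i j ∈ G) :
    ∃ B : Matrix ι κ K, (∀ i j, B i j ∈ G) ∧ (∀ i j, A i j = 0 → B i j = 0) ∧
      (∀ i, ∑ j, B i j = ∑ j, A i j) ∧ ∀ j, ∑ i, B i j = ∑ i, A i j := by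
  by_cases hA : (A.entriesNotMem G).Nonempty
  · obtain ⟨A', hlt, hzero, hrow', hcol'⟩ := exists_card_entriesNotMem_lt G A hrow hcol hA
    obtain ⟨B, hBG, hBzero, hBrow, hBcol⟩ :=
      exists_mem_addSubgroup_sum_eq G A' (fun i => hrow' i ▸ hrow i) (fun j => hcol' j ▸ hcol j)
    exact ⟨B, hBG, fun i j h => hBzero i j (hzero i j h), fun i => (hBrow i).trans (hrow' i),
      fun j => (hBcol j).trans (hcol' j)⟩
  · refine ⟨A, fun i j => ?_, fun _ _ => id, fun _ => rfl, fun _ => rfl⟩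
    exact not_not.mp fun h => hA ⟨(i, j), mem_entriesNotMem.mpr h⟩
termination_by #(A.entriesNotMem G)

end

/-- Integer value property of the transportation problem: if every row-sum and
every column-sum of a real matrix `A` is an integer, then the nonzero entries
of `A` can be replaced by integers without changing any row-sum or column-sum. -/
theorem integer_value_property_matrix
    (m n : ℕ) (A : Matrix (Fin m) (Fin n) ℝ)
    (hrow : ∀ i : Fin m, ∃ z : ℤ, ∑ j, A i j = (z : ℝ))
    (hcol : ∀ j : Fin n, ∃ z : ℤ, ∑ i, A i j = (z : ℝ)) :
    ∃ B : Matrix (Fin m) (Fin n) ℤ,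
      (∀ i j, A i j = 0 → B i j = 0) ∧
      (∀ i : Fin m, ∑ j, (B i j : ℝ) = ∑ j, A i j) ∧
      (∀ j : Fin n, ∑ i, (B i j : ℝ) = ∑ i, A i j) := by
  let G := (Int.castAddHom ℝ).range
  have hG (x : ℝ) : x ∈ G ↔ ∃ z : ℤ, x = z := by
    simp only [G, AddMonoidHom.mem_range, Int.coe_castAddHom, eq_comm]
  obtain ⟨B, hBG, hzero, hBrow, hBcol⟩ := Matrix.exists_mem_addSubgroup_sum_eq G A
    (fun i => (hG _).mpr (hrow i)) (fun j => (hG _).mpr (hcol j))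
  choose Z hZ using fun i j => (hG (B i j)).mp (hBG i j)
  refine ⟨Z, fun i j h => ?_, fun i => ?_, fun j => ?_⟩
  · exact_mod_cast (hZ i j).symm.trans (hzero i j h)
  · simp only [← hZ, hBrow]
  · simp only [← hZ, hBcol]
end

section
/- If a Polish group G is a topological factor-group of a closed subgroup of a Polish group H, then for every Borel G-space X there is a Borel H-space Y with E^X_G Borel reducible to E^Y_H. -/
/-!
Mackey's induced action. By the Kuratowski–Ryll-Nardzewski selection theorem applied to
`h ↦ h • S`, the closed subgroup `S` has a Borel selector `r` for its left cosets, so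
`T = {t | r t = t}` is a Borel transversal and every `h : H` factors as `h = r h * s h` with
`s h ∈ S`. Then `H` acts on `X × T` by `h • (x, t) = (φ (s (h * t)) • x, r (h * t))`, and
`x ↦ (x, r 1)` is a reduction: an `H`-translate of `(x₁, r 1)` has the form `(φ s • x₁, …)`,
and conversely `φ s • x₁` is reached by `r 1 * s * (r 1)⁻¹`. Finally, embedding `X × T` into `ℝ`
produces a Borel `H`-space in `Type`.
-/

/-- A Borel `H`-space: a standard Borel space together with a Borel-measurable
action of `H`. -/
structure BorelActionSpace (H : Type*) [Group H] [MeasurableSpace H] where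
  Y : Type
  [mY : MeasurableSpace Y]
  [sbY : StandardBorelSpace Y]
  act : H → Y → Y
  one_act : ∀ y, act 1 y = y
  mul_act : ∀ g h y, act (g * h) y = act g (act h y)
  meas : Measurable fun p : H × Y => act p.1 p.2

attribute [instance] BorelActionSpace.mY BorelActionSpace.sbY

open Filter Topology Set Metric Pointwise

theorem measurable_sInf_setOf {β : Type*} [MeasurableSpace β] {p : β → ℕ → Prop}
    (hp : ∀ x, ∃ n, p x n) (hm : ∀ n, MeasurableSet {x | p x n}) :
    Measurable fun x => sInf {n | p x n} := by
  classical
  convert measurable_find hp hm using 2 with x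
  exact Nat.sInf_def (hp x)

section FirstIn

variable {α : Type*} {d : ℕ → α}

variable (d) in
noncomputable def firstIn (U : Set α) : α := d (sInf {n | d n ∈ U})

theorem firstIn_mem {U : Set α} (h : ∃ n, d n ∈ U) : firstIn d U ∈ U :=
  Nat.sInf_mem h

theorem measurable_firstIn {β : Type*} [MeasurableSpace β] [MeasurableSpace α] {U : β → Set α}
    (h : ∀ x, ∃ n, d n ∈ U x) (hm : ∀ n, MeasurableSet {x | d n ∈ U x}) :
    Measurable fun x => firstIn d (U x) :=
  measurable_from_nat.comp (measurable_sInf_setOf h hm)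

end FirstIn

def WeaklyMeasurable {β α : Type*} [MeasurableSpace β] [TopologicalSpace α]
    (F : β → Set α) : Prop :=
  ∀ U, IsOpen U → MeasurableSet {x | (F x ∩ U).Nonempty}

section Greedy

variable {α : Type*} [PseudoMetricSpace α] {d : ℕ → α}

theorem DenseRange.exists_mem_thickening_inter_ball (hd : DenseRange d) {F : Set α} {p : α}
    {ε δ r : ℝ} (hp : p ∈ thickening ε F) (hδ : 0 < δ) (hr : ε ≤ r) :
    ∃ n, d n ∈ thickening δ F ∩ ball p r := by
  obtain ⟨y, hyF, hpy⟩ := mem_thickening_iff.1 hp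
  refine hd.exists_mem_open (isOpen_thickening.inter isOpen_ball) ⟨y, ?_, ?_⟩
  · exact self_subset_thickening hδ F hyF
  · rw [mem_ball, dist_comm]
    exact hpy.trans_le hr

theorem DenseRange.exists_mem_thickening (hd : DenseRange d) {F : Set α} (hF : F.Nonempty)
    {δ : ℝ} (hδ : 0 < δ) : ∃ n, d n ∈ thickening δ F :=
  hd.exists_mem_open isOpen_thickening (hF.mono (self_subset_thickening hδ F))

variable (d) in
/-- The Kuratowski–Ryll-Nardzewski approximations of a point of `closure F`. -/
noncomputable def greedySeq (F : Set α) : ℕ → α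
  | 0 => firstIn d (thickening 1 F)
  | k + 1 => firstIn d (thickening ((1 / 2) ^ (k + 1)) F ∩ ball (greedySeq F k) (2 * (1 / 2) ^ k))

theorem exists_mem_greedySeq_step (hd : DenseRange d) {F : Set α} {k : ℕ}
    (hk : greedySeq d F k ∈ thickening ((1 / 2) ^ k) F) :
    ∃ n, d n ∈ thickening ((1 / 2) ^ (k + 1)) F ∩ ball (greedySeq d F k) (2 * (1 / 2) ^ k) :=
  hd.exists_mem_thickening_inter_ball hk (by positivity)
    (by linarith [pow_pos (by norm_num : (0 : ℝ) < 1 / 2) k])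

theorem greedySeq_mem_thickening (hd : DenseRange d) {F : Set α} (hF : F.Nonempty) :
    ∀ k, greedySeq d F k ∈ thickening ((1 / 2) ^ k) F
  | 0 => by
    rw [pow_zero]
    exact firstIn_mem (hd.exists_mem_thickening hF one_pos)
  | k + 1 => (firstIn_mem (exists_mem_greedySeq_step hd (greedySeq_mem_thickening hd hF k))).1

theorem dist_greedySeq_succ_lt (hd : DenseRange d) {F : Set α} (hF : F.Nonempty) (k : ℕ) :
    dist (greedySeq d F (k + 1)) (greedySeq d F k) < 2 * (1 / 2) ^ k :=
  (firstIn_mem (exists_mem_greedySeq_step hd (greedySeq_mem_thickening hd hF k))).2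

theorem cauchySeq_greedySeq (hd : DenseRange d) {F : Set α} (hF : F.Nonempty) :
    CauchySeq (greedySeq d F) :=
  cauchySeq_of_le_geometric (1 / 2) 2 (by norm_num) fun k => by
    rw [dist_comm]
    exact (dist_greedySeq_succ_lt hd hF k).le

variable (d) in
noncomputable def greedyPoint (F : Set α) : α :=
  haveI : Nonempty α := ⟨d 0⟩
  limUnder atTop (greedySeq d F)

theorem tendsto_greedySeq [CompleteSpace α] (hd : DenseRange d) {F : Set α} (hF : F.Nonempty) :
    Tendsto (greedySeq d F) atTop (𝓝 (greedyPoint d F)) :=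
  (cauchySeq_greedySeq hd hF).tendsto_limUnder

theorem greedyPoint_mem [CompleteSpace α] (hd : DenseRange d) {F : Set α} (hF : F.Nonempty)
    (hFc : IsClosed F) : greedyPoint d F ∈ F := by
  have h_lim : Tendsto (fun k => infDist (greedySeq d F k) F) atTop
      (𝓝 (infDist (greedyPoint d F) F)) :=
    ((continuous_infDist_pt F).tendsto _).comp (tendsto_greedySeq hd hF)
  have h_zero : Tendsto (fun k => infDist (greedySeq d F k) F) atTop (𝓝 0) :=
    squeeze_zero (fun _ => infDist_nonneg)
      (fun k => ((mem_thickening_iff_infDist_lt hF).1 (greedySeq_mem_thickening hd hF k)).le)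
      (tendsto_pow_atTop_nhds_zero_of_lt_one (by norm_num) (by norm_num))
  exact (hFc.mem_iff_infDist_zero hF).2 (tendsto_nhds_unique h_lim h_zero)

theorem measurable_greedySeq {β : Type*} [MeasurableSpace β] [MeasurableSpace α]
    [OpensMeasurableSpace α] (hd : DenseRange d) {F : β → Set α} (hF : ∀ x, (F x).Nonempty)
    (hFm : WeaklyMeasurable F) :
    ∀ k, Measurable fun x => greedySeq d (F x) k := by
  have h_thick : ∀ z δ, MeasurableSet {x | z ∈ thickening δ (F x)} := fun z δ => by
    convert hFm _ (isOpen_ball (x := z) (ε := δ)) using 3 with x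
    simp only [mem_thickening_iff, Set.Nonempty, mem_inter_iff, mem_ball, dist_comm]
  intro k
  induction k with
  | zero =>
    exact measurable_firstIn (fun x => hd.exists_mem_thickening (hF x) one_pos)
      fun n => h_thick _ _
  | succ k ih =>
    refine measurable_firstIn
      (fun x => exists_mem_greedySeq_step hd (greedySeq_mem_thickening hd (hF x) k))
      fun n => ?_
    convert (h_thick (d n) ((1 / 2) ^ (k + 1))).inter
      (ih (measurableSet_ball (x := d n) (ε := 2 * (1 / 2) ^ k))) using 1
    ext x
    simp only [mem_ofPred_eq, mem_inter_iff, mem_preimage, mem_ball_comm]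

theorem measurable_greedyPoint {β : Type*} [MeasurableSpace β] [MeasurableSpace α]
    [BorelSpace α] [CompleteSpace α] (hd : DenseRange d) {F : β → Set α} (hF : ∀ x, (F x).Nonempty)
    (hFm : WeaklyMeasurable F) :
    Measurable fun x => greedyPoint d (F x) :=
  measurable_of_tendsto_metrizable (measurable_greedySeq hd hF hFm)
    (tendsto_pi_nhds.2 fun x => tendsto_greedySeq hd (hF x))

end Greedy

theorem exists_measurable_selection {β α : Type*} [MeasurableSpace β] [TopologicalSpace α]
    [PolishSpace α] [MeasurableSpace α] [BorelSpace α] [Nonempty α] {F : β → Set α}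
    (hF : ∀ x, (F x).Nonempty) (hFc : ∀ x, IsClosed (F x))
    (hFm : WeaklyMeasurable F) :
    ∃ σ : Set α → α, (∀ x, σ (F x) ∈ F x) ∧ Measurable fun x => σ (F x) := by
  let := TopologicalSpace.upgradeIsCompletelyMetrizable α
  obtain ⟨d, hd⟩ := TopologicalSpace.exists_dense_seq α
  exact ⟨greedyPoint d, fun x => greedyPoint_mem hd (hF x) (hFc x),
    measurable_greedyPoint hd hF hFm⟩

structure IsCosetSelector {H : Type*} [Group H] (S : Subgroup H) (r : H → H) : Prop where
  inv_mul_mem : ∀ h, (r h)⁻¹ * h ∈ S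
  apply_mul_eq : ∀ h, ∀ s ∈ S, r (h * s) = r h

theorem Subgroup.setOf_smul_inter_nonempty_eq_mul {H : Type*} [Group H] (S : Subgroup H)
    (U : Set H) : {h : H | (h • (S : Set H) ∩ U).Nonempty} = U * S := by
  ext h
  simp only [mem_ofPred_eq, Set.Nonempty, mem_inter_iff, mem_leftCoset_iff, Set.mem_mul]
  constructor
  · rintro ⟨u, hu, huU⟩
    exact ⟨u, huU, u⁻¹ * h, by simpa using S.inv_mem hu, by group⟩
  · rintro ⟨u, huU, s, hs, rfl⟩
    exact ⟨u, by simpa using S.inv_mem hs, huU⟩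

theorem Subgroup.exists_measurable_isCosetSelector {H : Type*} [Group H] [TopologicalSpace H]
    [IsTopologicalGroup H] [PolishSpace H] [MeasurableSpace H] [BorelSpace H] (S : Subgroup H)
    (hS : IsClosed (S : Set H)) : ∃ r : H → H, Measurable r ∧ IsCosetSelector S r := by
  obtain ⟨σ, hσ, hσm⟩ := exists_measurable_selection (F := fun h : H => h • (S : Set H))
    (fun h => ⟨h, (mem_leftCoset_iff h).2 (by simp)⟩) (fun h => hS.leftCoset h)
    fun U hU => by
      rw [S.setOf_smul_inter_nonempty_eq_mul]
      exact (hU.mul_right (t := (S : Set H))).measurableSet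
  refine ⟨fun h => σ (h • (S : Set H)), hσm, fun h => ?_, fun h s hs => ?_⟩
  · simpa using S.inv_mem ((mem_leftCoset_iff h).1 (hσ h))
  · simp only [mul_smul, leftCoset_mem_leftCoset S hs]

namespace IsCosetSelector

variable {G H X : Type*} [Group G] [Group H] {S : Subgroup H} {r : H → H}
  (hr : IsCosetSelector S r)
include hr

def residue (h : H) : S := ⟨(r h)⁻¹ * h, hr.inv_mul_mem h⟩

theorem apply_apply (h : H) : r (r h) = r h := by
  simpa using (hr.apply_mul_eq (r h) _ (hr.inv_mul_mem h)).symm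

theorem apply_mul_apply (g h : H) : r (g * r h) = r (g * h) := by
  simpa [mul_assoc] using (hr.apply_mul_eq (g * r h) _ (hr.inv_mul_mem h)).symm

theorem residue_mul_apply_mul_residue (g h : H) :
    hr.residue (g * r h) * hr.residue h = hr.residue (g * h) := by
  ext
  simp only [residue, Subgroup.coe_mul, hr.apply_mul_apply]
  group

theorem residue_of_isFixedPt {t : H} (ht : r t = t) : hr.residue t = 1 := by
  ext
  simp [residue, ht]

/-- Mackey's induced action `H ×_S X`, realised on `X × T` for the transversal
`T = fixedPoints r` of `H ⧸ S`. -/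
def inducedAct (φ : S →* G) (a : G → X → X) (h : H) (p : X × Function.fixedPoints r) :
    X × Function.fixedPoints r :=
  (a (φ (hr.residue (h * p.2))) p.1, ⟨r (h * p.2), hr.apply_apply _⟩)

variable {φ : S →* G} {a : G → X → X}

theorem inducedAct_one (ha1 : ∀ x, a 1 x = x) (p : X × Function.fixedPoints r) :
    hr.inducedAct φ a 1 p = p := by
  obtain ⟨x, t, ht⟩ := p
  simp only [inducedAct, one_mul, hr.residue_of_isFixedPt ht, map_one, ha1]
  exact Prod.ext rfl (Subtype.ext ht)

theorem inducedAct_mul (hamul : ∀ g h x, a (g * h) x = a g (a h x)) (g h : H)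
    (p : X × Function.fixedPoints r) :
    hr.inducedAct φ a (g * h) p = hr.inducedAct φ a g (hr.inducedAct φ a h p) := by
  simp only [inducedAct, ← hamul, ← map_mul, hr.residue_mul_apply_mul_residue, ← mul_assoc,
    hr.apply_mul_apply]

theorem measurable_inducedAct [MeasurableSpace G] [MeasurableSpace H] [MeasurableMul₂ H]
    [MeasurableInv H] [MeasurableSpace X] (hrm : Measurable r) (hφ : Measurable φ)
    (ha : Measurable fun q : G × X => a q.1 q.2) :
    Measurable fun q : H × (X × Function.fixedPoints r) => hr.inducedAct φ a q.1 q.2 := by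
  have h_mul : Measurable fun q : H × (X × Function.fixedPoints r) => q.1 * (q.2.2 : H) :=
    measurable_fst.mul (measurable_subtype_coe.comp (measurable_snd.comp measurable_snd))
  have h_residue : Measurable fun q : H × (X × Function.fixedPoints r) =>
      hr.residue (q.1 * q.2.2) :=
    (((hrm.comp h_mul).inv).mul h_mul).subtype_mk
  exact (ha.comp ((hφ.comp h_residue).prodMk (measurable_fst.comp measurable_snd))).prodMk
    (hrm.comp h_mul).subtype_mk

theorem exists_inducedAct_eq_iff (hφ : Function.Surjective φ) (t : Function.fixedPoints r)
    (x₁ x₂ : X) : (∃ g, a g x₁ = x₂) ↔ ∃ h, hr.inducedAct φ a h (x₁, t) = (x₂, t) := by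
  obtain ⟨t, ht⟩ := t
  constructor
  · rintro ⟨g, rfl⟩
    obtain ⟨s, rfl⟩ := hφ g
    have h_eq : t * s * t⁻¹ * t = t * s := by group
    have h_r : r (t * s) = t := (hr.apply_mul_eq t s s.2).trans ht
    have h_residue : hr.residue (t * s) = s := by ext; simp [residue, h_r]
    refine ⟨t * s * t⁻¹, ?_⟩
    simp only [inducedAct, h_eq, h_residue, h_r]
  · rintro ⟨h, hh⟩
    exact ⟨_, congrArg Prod.fst hh⟩

end IsCosetSelector

theorem BorelActionSpace.exists_measurableEquiv_of_action {H : Type*} [Group H] [MeasurableSpace H]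
    {Z : Type*} [MeasurableSpace Z] [StandardBorelSpace Z] (act : H → Z → Z)
    (one_act : ∀ z, act 1 z = z) (mul_act : ∀ g h z, act (g * h) z = act g (act h z))
    (meas : Measurable fun q : H × Z => act q.1 q.2) :
    ∃ (B : BorelActionSpace H) (e : Z ≃ᵐ B.Y), ∀ h z, B.act h (e z) = e (act h z) := by
  obtain ⟨j, hj⟩ := MeasureTheory.exists_measurableEmbedding_real Z
  have : StandardBorelSpace (range j) := hj.measurableSet_range.standardBorel
  let e := hj.equivRange
  refine ⟨{ Y := range j
            act := fun h y => e (act h (e.symm y))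
            one_act := fun y => by simp [one_act]
            mul_act := fun g h y => by simp [mul_act]
            meas := e.measurable.comp
              (meas.comp (measurable_fst.prodMk (e.symm.measurable.comp measurable_snd))) },
    e, fun h z => by simp⟩

theorem factor_of_closed_subgroup_borel_reducible_general
    (G H : Type*)
    [Group G] [TopologicalSpace G]
    [MeasurableSpace G] [BorelSpace G]
    [Group H] [TopologicalSpace H] [IsTopologicalGroup H] [PolishSpace H]
    [MeasurableSpace H] [BorelSpace H]
    (S : Subgroup H) (hS : IsClosed (S : Set H))
    (φ : S →* G) (hφc : Continuous φ)
    (hφs : Function.Surjective φ)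
    (X : Type) [MeasurableSpace X] [StandardBorelSpace X]
    (a : G → X → X)
    (ha1 : ∀ x, a 1 x = x) (hamul : ∀ g h x, a (g * h) x = a g (a h x))
    (hameas : Measurable fun p : G × X => a p.1 p.2) :
    ∃ (B : BorelActionSpace H) (f : X → B.Y), Measurable f ∧
      ∀ x₁ x₂ : X, (∃ g : G, a g x₁ = x₂) ↔ (∃ h : H, B.act h (f x₁) = f x₂) := by
  obtain ⟨r, hrm, hr⟩ := S.exists_measurable_isCosetSelector hS
  have : StandardBorelSpace (Function.fixedPoints r) :=
    (measurableSet_eq_fun hrm measurable_id).standardBorel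
  obtain ⟨B, e, he⟩ := BorelActionSpace.exists_measurableEquiv_of_action (hr.inducedAct φ a)
    (hr.inducedAct_one ha1) (hr.inducedAct_mul hamul)
    (hr.measurable_inducedAct hrm hφc.measurable hameas)
  let t : Function.fixedPoints r := ⟨r 1, hr.apply_apply 1⟩
  refine ⟨B, fun x => e (x, t), e.measurable.comp (measurable_id.prodMk measurable_const),
    fun x₁ x₂ => ?_⟩
  simp only [he, e.injective.eq_iff]
  exact hr.exists_inducedAct_eq_iff hφs t x₁ x₂

/-- If a Polish group `G` is a topological factor-group of a closed subgroup of
a Polish group `H`, then every orbit equivalence relation of a Borel `G`-space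
is Borel reducible to the orbit equivalence relation of some Borel `H`-space. -/
theorem factor_of_closed_subgroup_borel_reducible
    (G H : Type*)
    [Group G] [TopologicalSpace G] [IsTopologicalGroup G] [PolishSpace G]
    [MeasurableSpace G] [BorelSpace G]
    [Group H] [TopologicalSpace H] [IsTopologicalGroup H] [PolishSpace H]
    [MeasurableSpace H] [BorelSpace H]
    (S : Subgroup H) (hS : IsClosed (S : Set H))
    (φ : S →* G) (hφc : Continuous φ) (hφo : IsOpenMap φ)
    (hφs : Function.Surjective φ)
    (X : Type) [MeasurableSpace X] [StandardBorelSpace X]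
    (a : G → X → X)
    (ha1 : ∀ x, a 1 x = x) (hamul : ∀ g h x, a (g * h) x = a g (a h x))
    (hameas : Measurable fun p : G × X => a p.1 p.2) :
    ∃ (B : BorelActionSpace H) (f : X → B.Y), Measurable f ∧
      ∀ x₁ x₂ : X, (∃ g : G, a g x₁ = x₂) ↔ (∃ h : H, B.act h (f x₁) = f x₂) :=
  factor_of_closed_subgroup_borel_reducible_general G H S hS φ hφc hφs X a ha1 hamul hameas
end
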